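/- arXiv:1211.6099 — 7 statements merged into one kernel-verified Lean document; each statement's English description precedes it below -/
import Mathlib

section
/- Define T : [0,∞) → [0,∞) by Tx = 1 if 0 ≤ x ≤ 0.8 and Tx = 0.6 if x > 0.8. Then T satisfies the contractive-like condition |Tx − Ty| ≤ δ|x − y| + φ(|x − Tx|) for every δ ∈ [0,1), with φ(t) = 2t, yet T has no fixed point. -/
open Filter Topology

theorem example_contractive_like_no_fixed_point
    (T : ℝ → ℝ) (hT : ∀ x, T x = if x ≤ 0.8 then 1 else 0.6) :
    (∀ δ ∈ Set.Ico (0 : ℝ) 1, ∀ x ∈ Set.Ici (0 : ℝ), ∀ y ∈ Set.Ici (0 : ℝ),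
        |T x - T y| ≤ δ * |x - y| + 2 * |x - T x|) ∧
    (StrictMono (fun t : ℝ => 2 * t) ∧ Continuous (fun t : ℝ => 2 * t) ∧
        (fun t : ℝ => 2 * t) 0 = 0) ∧
    ¬ ∃ x ∈ Set.Ici (0 : ℝ), T x = x := by
  refine ⟨?_, ⟨fun a b h => by dsimp; linarith, by continuity, by simp⟩, ?_⟩
  · intro δ hδ x _ y _
    have hδ0 := hδ.1
    have key : |T x - T y| ≤ 2 * |x - T x| := by
      rw [hT x, hT y]
      rcases le_or_gt x 0.8 with hx | hx <;> rcases le_or_gt y 0.8 with hy | hy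
      · rw [if_pos hx, if_pos hy]
        rw [abs_of_nonpos (by linarith)]
        simp <;> linarith
      · rw [if_pos hx, if_neg (not_le.mpr hy), abs_of_nonpos (by linarith : x - 1 ≤ 0)]
        rw [abs_le]; constructor <;> norm_num <;> linarith
      · rw [if_neg (not_le.mpr hx), if_pos hy, abs_of_nonneg (by linarith : (0:ℝ) ≤ x - 0.6)]
        rw [abs_le]; constructor <;> norm_num <;> linarith
      · rw [if_neg (not_le.mpr hx), if_neg (not_le.mpr hy),
          abs_of_nonneg (by linarith : (0:ℝ) ≤ x - 0.6)]
        simp; linarith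
    have : 0 ≤ δ * |x - y| := mul_nonneg hδ0 (abs_nonneg _)
    linarith
  · rintro ⟨x, _, hx⟩
    rw [hT x] at hx
    rcases le_or_gt x 0.8 with h | h
    · rw [if_pos h] at hx; linarith
    · rw [if_neg (not_le.mpr h)] at hx; linarith
end

section
/- Let T : E → E satisfy the Zamfirescu conditions: there exist a ∈ (0,1) and b, c ∈ (0, 1/2) such that for each pair x, y at least one of (z1) ‖Tx − Ty‖ ≤ a‖x − y‖, (z2) ‖Tx − Ty‖ ≤ b(‖x − Tx‖ + ‖y − Ty‖), (z3) ‖Tx − Ty‖ ≤ c(‖x − Ty‖ + ‖y − Tx‖) holds. Then with δ = max{a, b/(1−b), c/(1−c)} ∈ [0,1), T satisfies ‖Tx − Ty‖ ≤ δ‖x − y‖ + 2δ‖x − Tx‖ for all x, y ∈ E. -/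
open Filter Topology

theorem zamfirescu_implies_quasi_contractive
    {X : Type*} [NormedAddCommGroup X] (E : Set X) (hE : E.Nonempty)
    (T : X → X) (hT : Set.MapsTo T E E)
    (a b c : ℝ) (ha : a ∈ Set.Ioo (0 : ℝ) 1)
    (hb : b ∈ Set.Ioo (0 : ℝ) (1 / 2)) (hc : c ∈ Set.Ioo (0 : ℝ) (1 / 2))
    (hz : ∀ x ∈ E, ∀ y ∈ E,
      ‖T x - T y‖ ≤ a * ‖x - y‖ ∨
      ‖T x - T y‖ ≤ b * (‖x - T x‖ + ‖y - T y‖) ∨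
      ‖T x - T y‖ ≤ c * (‖x - T y‖ + ‖y - T x‖)) :
    max a (max (b / (1 - b)) (c / (1 - c))) ∈ Set.Ico (0 : ℝ) 1 ∧
    ∀ x ∈ E, ∀ y ∈ E,
      ‖T x - T y‖ ≤ max a (max (b / (1 - b)) (c / (1 - c))) * ‖x - y‖ +
        2 * max a (max (b / (1 - b)) (c / (1 - c))) * ‖x - T x‖ := by
  obtain ⟨ha0, ha1⟩ := ha
  obtain ⟨hb0, hb1⟩ := hb
  obtain ⟨hc0, hc1⟩ := hc
  have hb' : (0:ℝ) < 1 - b := by linarith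
  have hc' : (0:ℝ) < 1 - c := by linarith
  set δ := max a (max (b / (1 - b)) (c / (1 - c))) with hδ
  have hbδ : b / (1 - b) ≤ δ := le_trans (le_max_left _ _) (le_max_right _ _)
  have hcδ : c / (1 - c) ≤ δ := le_trans (le_max_right _ _) (le_max_right _ _)
  have haδ : a ≤ δ := le_max_left _ _
  have hδ0 : 0 ≤ δ := le_trans ha0.le haδ
  have hδ1 : δ < 1 := by
    rw [hδ]
    apply max_lt ha1
    apply max_lt <;> rw [div_lt_one (by linarith)] <;> linarith
  refine ⟨⟨hδ0, hδ1⟩, ?_⟩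
  intro x hx y hy
  have h2 : (0:ℝ) ≤ ‖x - T x‖ := norm_nonneg _
  have h3 : (0:ℝ) ≤ ‖x - y‖ := norm_nonneg _
  rcases hz x hx y hy with h | h | h
  · nlinarith [mul_le_mul_of_nonneg_right haδ h3]
  · have t1 : ‖y - T y‖ ≤ ‖x - y‖ + ‖x - T x‖ + ‖T x - T y‖ := by
      have := norm_sub_le_norm_sub_add_norm_sub y x (T y)
      have := norm_sub_le_norm_sub_add_norm_sub x (T x) (T y)
      have e1 : ‖y - x‖ = ‖x - y‖ := norm_sub_rev y x
      linarith
    have key : ‖T x - T y‖ ≤ b / (1 - b) * (‖x - y‖ + 2 * ‖x - T x‖) := by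
      rw [div_mul_eq_mul_div, le_div_iff₀ hb']
      nlinarith
    have := mul_le_mul_of_nonneg_right hbδ (by positivity : (0:ℝ) ≤ ‖x - y‖ + 2 * ‖x - T x‖)
    nlinarith
  · have t1 : ‖x - T y‖ ≤ ‖x - T x‖ + ‖T x - T y‖ := norm_sub_le_norm_sub_add_norm_sub x (T x) (T y)
    have t2 : ‖y - T x‖ ≤ ‖x - y‖ + ‖x - T x‖ := by
      have := norm_sub_le_norm_sub_add_norm_sub y x (T x)
      have e1 : ‖y - x‖ = ‖x - y‖ := norm_sub_rev y x
      linarith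
    have key : ‖T x - T y‖ ≤ c / (1 - c) * (‖x - y‖ + 2 * ‖x - T x‖) := by
      rw [div_mul_eq_mul_div, le_div_iff₀ hc']
      nlinarith
    have := mul_le_mul_of_nonneg_right hcδ (by positivity : (0:ℝ) ≤ ‖x - y‖ + 2 * ‖x - T x‖)
    nlinarith
end

section
/- Let E be a nonempty closed convex subset of a Banach space X, and T : E → E a contractive-like operator (with constant δ ∈ [0,1) and gauge φ) with a fixed point p. Fix k ≥ 2 and let {α_n}, {β_n^i} (i = 1,...,k−1) be sequences in [0,1) with ∑ α_n = ∞. Define the multistep iteration: x_0 ∈ E, y_n^{k−1} = (1 − β_n^{k−1}) x_n + β_n^{k−1} T x_n, y_n^i = (1 − β_n^i) y_n^{i+1} + β_n^i T y_n^{i+1} for i = k−2,...,1, and x_{n+1} = (1 − α_n) y_n^1 + α_n T y_n^1. Then x_n converges to p, the unique fixed point of T. -/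
/-! Since `φ 0 = 0`, the contractive-like condition applied at the fixed point `p` says that `T` is
a quasi-contraction: `‖T z - p‖ ≤ δ ‖z - p‖`. Hence every averaging step `(1 - t) z + t T z`
shrinks the distance to `p` by the factor `1 - (1 - δ) t ≤ 1`, the inner steps do not increase it,
and `‖x (n + 1) - p‖ ≤ (1 - (1 - δ) α n) ‖x n - p‖ ≤ exp (-(1 - δ) α n) ‖x n - p‖`, which tends to
`0` because `∑ α n = ∞`. -/

open Filter Topology

theorem le_mul_exp_neg_sum_of_le_one_sub_mul {a c : ℕ → ℝ} (ha : ∀ n, 0 ≤ a n)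
    (hac : ∀ n, a (n + 1) ≤ (1 - c n) * a n) (n : ℕ) :
    a n ≤ a 0 * Real.exp (-∑ i ∈ Finset.range n, c i) := by
  induction n with
  | zero => simp
  | succ n ih =>
    calc a (n + 1) ≤ (1 - c n) * a n := hac n
      _ ≤ Real.exp (-c n) * a n := by gcongr; exacts [ha n, Real.one_sub_le_exp_neg _]
      _ ≤ Real.exp (-c n) * (a 0 * Real.exp (-∑ i ∈ Finset.range n, c i)) := by gcongr
      _ = a 0 * Real.exp (-∑ i ∈ Finset.range (n + 1), c i) := by
        rw [Finset.sum_range_succ, neg_add, Real.exp_add]; ring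

theorem tendsto_zero_of_le_one_sub_mul {a c : ℕ → ℝ} (ha : ∀ n, 0 ≤ a n)
    (hac : ∀ n, a (n + 1) ≤ (1 - c n) * a n)
    (hc : Tendsto (fun N => ∑ n ∈ Finset.range N, c n) atTop atTop) :
    Tendsto a atTop (𝓝 0) := by
  have hexp : Tendsto (fun n => a 0 * Real.exp (-∑ i ∈ Finset.range n, c i)) atTop (𝓝 0) := by
    simpa using (Real.tendsto_exp_atBot.comp (tendsto_neg_atTop_atBot.comp hc)).const_mul (a 0)
  exact squeeze_zero ha (le_mul_exp_neg_sum_of_le_one_sub_mul ha hac) hexp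

section MannStep

variable {X : Type*} [NormedAddCommGroup X] {E : Set X} {T : X → X} {p : X} {δ : ℝ}

theorem norm_sub_fixedPoint_le_of_contractiveLike {φ : ℝ → ℝ} (hφ0 : φ 0 = 0)
    (hcontr : ∀ x ∈ E, ∀ y ∈ E, ‖T x - T y‖ ≤ δ * ‖x - y‖ + φ ‖x - T x‖)
    (hp : p ∈ E) (hTp : T p = p) : ∀ z ∈ E, ‖T z - p‖ ≤ δ * ‖z - p‖ := by
  intro z hz
  simpa [hTp, hφ0, norm_sub_rev] using hcontr p hp z hz

theorem eq_of_isFixedPt_of_quasiContraction (hδ : δ < 1)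
    (hquasi : ∀ z ∈ E, ‖T z - p‖ ≤ δ * ‖z - p‖) {q : X} (hq : q ∈ E) (hTq : T q = q) :
    q = p := by
  have h := hquasi q hq
  rw [hTq] at h
  have : ‖q - p‖ = 0 := le_antisymm (by nlinarith [norm_nonneg (q - p)]) (norm_nonneg _)
  exact sub_eq_zero.mp (norm_eq_zero.mp this)

variable [NormedSpace ℝ X] {z : X} {t : ℝ}

def mannStep (T : X → X) (t : ℝ) (z : X) : X := (1 - t) • z + t • T z

theorem mannStep_mem (hEco : Convex ℝ E) (hT : Set.MapsTo T E E) (hz : z ∈ E)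
    (ht0 : 0 ≤ t) (ht1 : t ≤ 1) : mannStep T t z ∈ E :=
  hEco hz (hT hz) (by linarith) ht0 (by ring)

theorem norm_mannStep_sub_le (ht0 : 0 ≤ t) (ht1 : t ≤ 1) (hz : ‖T z - p‖ ≤ δ * ‖z - p‖) :
    ‖mannStep T t z - p‖ ≤ (1 - (1 - δ) * t) * ‖z - p‖ := by
  have hsplit : mannStep T t z - p = (1 - t) • (z - p) + t • (T z - p) := by
    unfold mannStep; module
  calc ‖mannStep T t z - p‖ ≤ ‖(1 - t) • (z - p)‖ + ‖t • (T z - p)‖ :=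
        hsplit ▸ norm_add_le _ _
    _ = (1 - t) * ‖z - p‖ + t * ‖T z - p‖ := by
        rw [norm_smul, norm_smul, Real.norm_of_nonneg (by linarith), Real.norm_of_nonneg ht0]
    _ ≤ (1 - t) * ‖z - p‖ + t * (δ * ‖z - p‖) := by gcongr
    _ = (1 - (1 - δ) * t) * ‖z - p‖ := by ring

theorem norm_mannStep_sub_le_norm (hδ : δ ≤ 1) (ht0 : 0 ≤ t) (ht1 : t ≤ 1)
    (hz : ‖T z - p‖ ≤ δ * ‖z - p‖) : ‖mannStep T t z - p‖ ≤ ‖z - p‖ :=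
  (norm_mannStep_sub_le ht0 ht1 hz).trans <|
    mul_le_of_le_one_left (norm_nonneg _) (by nlinarith)

theorem multistep_inner_mem_and_norm_sub_le (hEco : Convex ℝ E) (hT : Set.MapsTo T E E)
    (hδ : δ ≤ 1) (hquasi : ∀ z ∈ E, ‖T z - p‖ ≤ δ * ‖z - p‖) {k : ℕ} {β : ℕ → ℝ}
    (hβ : ∀ i, β i ∈ Set.Icc (0 : ℝ) 1) {x : X} {y : ℕ → X} (hx : x ∈ E)
    (hyk : y (k - 1) = mannStep T (β (k - 1)) x)
    (hyi : ∀ i, 1 ≤ i → i ≤ k - 2 → y i = mannStep T (β i) (y (i + 1)))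
    {j : ℕ} (hj1 : 1 ≤ j) (hjk : j ≤ k - 1) : y j ∈ E ∧ ‖y j - p‖ ≤ ‖x - p‖ := by
  have hstep : ∀ i z, z ∈ E → mannStep T (β i) z ∈ E ∧ ‖mannStep T (β i) z - p‖ ≤ ‖z - p‖ :=
    fun i z hz =>
      ⟨mannStep_mem hEco hT hz (hβ i).1 (hβ i).2,
        norm_mannStep_sub_le_norm hδ (hβ i).1 (hβ i).2 (hquasi z hz)⟩
  refine Nat.decreasingInduction' (fun i hi hi1 ih => ?_) hjk (hyk ▸ hstep _ x hx)
  obtain ⟨hmem, hnorm⟩ := hstep i _ ih.1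
  exact hyi i (hj1.trans hi1) (by omega) ▸ ⟨hmem, hnorm.trans ih.2⟩

end MannStep

theorem multistep_iteration_converges_general
    {X : Type*} [NormedAddCommGroup X] [NormedSpace ℝ X]
    (E : Set X) (hEco : Convex ℝ E)
    (T : X → X) (hT : Set.MapsTo T E E)
    (δ : ℝ) (hδ : δ ∈ Set.Ico (0 : ℝ) 1)
    (φ : ℝ → ℝ) (hφ0 : φ 0 = 0)
    (hcontr : ∀ x ∈ E, ∀ y ∈ E, ‖T x - T y‖ ≤ δ * ‖x - y‖ + φ ‖x - T x‖)
    (p : X) (hp : p ∈ E) (hTp : T p = p)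
    (k : ℕ) (hk : 2 ≤ k)
    (α : ℕ → ℝ) (β : ℕ → ℕ → ℝ)
    (hα : ∀ n, α n ∈ Set.Ico (0 : ℝ) 1)
    (hβ : ∀ n i, β n i ∈ Set.Ico (0 : ℝ) 1)
    (hαdiv : Tendsto (fun N => ∑ n ∈ Finset.range N, α n) atTop atTop)
    (x : ℕ → X) (y : ℕ → ℕ → X) (hx0 : x 0 ∈ E)
    (hyk : ∀ n, y n (k - 1) = (1 - β n (k - 1)) • x n + β n (k - 1) • T (x n))
    (hyi : ∀ n, ∀ i, 1 ≤ i → i ≤ k - 2 →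
      y n i = (1 - β n i) • y n (i + 1) + β n i • T (y n (i + 1)))
    (hxrec : ∀ n, x (n + 1) = (1 - α n) • y n 1 + α n • T (y n 1)) :
    Tendsto x atTop (𝓝 p) ∧ ∀ q ∈ E, T q = q → q = p := by
  have hquasi := norm_sub_fixedPoint_le_of_contractiveLike hφ0 hcontr hp hTp
  have hy1 : ∀ n, x n ∈ E → y n 1 ∈ E ∧ ‖y n 1 - p‖ ≤ ‖x n - p‖ := fun n hxn =>
    multistep_inner_mem_and_norm_sub_le hEco hT hδ.2.le hquasi
      (fun i => Set.Ico_subset_Icc_self (hβ n i)) hxn (hyk n) (hyi n)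
      le_rfl (by omega)
  have hxE : ∀ n, x n ∈ E := by
    intro n
    induction n with
    | zero => exact hx0
    | succ n ih => exact hxrec n ▸ mannStep_mem hEco hT (hy1 n ih).1 (hα n).1 (hα n).2.le
  have hdecay : ∀ n, ‖x (n + 1) - p‖ ≤ (1 - (1 - δ) * α n) * ‖x n - p‖ := by
    intro n
    obtain ⟨hyE, hyp⟩ := hy1 n (hxE n)
    rw [hxrec n]
    refine (norm_mannStep_sub_le (hα n).1 (hα n).2.le (hquasi _ hyE)).trans ?_
    gcongr
    nlinarith [mul_nonneg hδ.1 (hα n).1, (hα n).2]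
  have hsum : Tendsto (fun N => ∑ n ∈ Finset.range N, (1 - δ) * α n) atTop atTop := by
    simpa only [← Finset.mul_sum] using hαdiv.const_mul_atTop (by linarith [hδ.2])
  refine ⟨tendsto_iff_norm_sub_tendsto_zero.mpr ?_, fun q hq hTq => ?_⟩
  · exact tendsto_zero_of_le_one_sub_mul (fun n => norm_nonneg _) hdecay hsum
  · exact eq_of_isFixedPt_of_quasiContraction hδ.2 hquasi hq hTq

theorem multistep_iteration_converges
    {X : Type*} [NormedAddCommGroup X] [NormedSpace ℝ X] [CompleteSpace X]
    (E : Set X) (hEne : E.Nonempty) (hEcl : IsClosed E) (hEco : Convex ℝ E)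
    (T : X → X) (hT : Set.MapsTo T E E)
    (δ : ℝ) (hδ : δ ∈ Set.Ico (0 : ℝ) 1)
    (φ : ℝ → ℝ) (hφmono : StrictMonoOn φ (Set.Ici 0))
    (hφcont : ContinuousOn φ (Set.Ici 0)) (hφ0 : φ 0 = 0)
    (hcontr : ∀ x ∈ E, ∀ y ∈ E, ‖T x - T y‖ ≤ δ * ‖x - y‖ + φ ‖x - T x‖)
    (p : X) (hp : p ∈ E) (hTp : T p = p)
    (k : ℕ) (hk : 2 ≤ k)
    (α : ℕ → ℝ) (β : ℕ → ℕ → ℝ)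
    (hα : ∀ n, α n ∈ Set.Ico (0 : ℝ) 1)
    (hβ : ∀ n i, β n i ∈ Set.Ico (0 : ℝ) 1)
    (hαdiv : Tendsto (fun N => ∑ n ∈ Finset.range N, α n) atTop atTop)
    (x : ℕ → X) (y : ℕ → ℕ → X) (hx0 : x 0 ∈ E)
    (hyk : ∀ n, y n (k - 1) = (1 - β n (k - 1)) • x n + β n (k - 1) • T (x n))
    (hyi : ∀ n, ∀ i, 1 ≤ i → i ≤ k - 2 →
      y n i = (1 - β n i) • y n (i + 1) + β n i • T (y n (i + 1)))
    (hxrec : ∀ n, x (n + 1) = (1 - α n) • y n 1 + α n • T (y n 1)) :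
    Tendsto x atTop (𝓝 p) ∧ ∀ q ∈ E, T q = q → q = p :=
  multistep_iteration_converges_general E hEco T hT δ hδ φ hφ0 hcontr p hp hTp k hk α β hα hβ hαdiv
    x y hx0 hyk hyi hxrec
end

section
/- Let E be a nonempty closed convex subset of a Banach space X and T : E → E a contractive-like operator with fixed point p. Let {α_n}, {β_n} ⊂ [0,1) with ∑ α_n = ∞. Define the S-iteration: x_0 ∈ E, y_n = (1 − β_n) x_n + β_n T x_n, x_{n+1} = (1 − α_n) T x_n + α_n T y_n. Then x_n converges to the unique fixed point p of T. -/
/-! Taking `x := p` in the contractive-like inequality kills the `φ` term, since `φ ‖p - T p‖ = φ 0 = 0`: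
every point of `E` is moved toward `p` by the factor `δ`. Both half-steps of the S-iteration are convex
combinations, so one full step also contracts the distance to `p` by `δ`, and `‖x n - p‖ ≤ δ ^ n ‖x 0 - p‖`.
The same inequality applied to a second fixed point `q` gives `‖q - p‖ ≤ δ ‖q - p‖`, hence `q = p`. -/

open Filter Topology

section SIteration

variable {X : Type*} [NormedAddCommGroup X]

theorem norm_map_sub_fixedPoint_le {E : Set X} {T : X → X} {δ : ℝ} {φ : ℝ → ℝ} (hφ0 : φ 0 = 0)
    (hcontr : ∀ x ∈ E, ∀ y ∈ E, ‖T x - T y‖ ≤ δ * ‖x - y‖ + φ ‖x - T x‖)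
    {p : X} (hp : p ∈ E) (hTp : T p = p) {z : X} (hz : z ∈ E) :
    ‖T z - p‖ ≤ δ * ‖z - p‖ := by
  simpa [hTp, hφ0, norm_sub_rev] using hcontr p hp z hz

theorem eq_of_norm_map_sub_le {T : X → X} {δ : ℝ} (hδ : δ < 1) {p q : X}
    (hq : ‖T q - p‖ ≤ δ * ‖q - p‖) (hTq : T q = q) : q = p := by
  rw [hTq] at hq
  have : ‖q - p‖ = 0 := by nlinarith [norm_nonneg (q - p)]
  exact norm_sub_eq_zero_iff.mp this

variable [NormedSpace ℝ X]

theorem norm_combo_sub_le {a : ℝ} (ha : a ∈ Set.Icc (0 : ℝ) 1) (u v p : X) :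
    ‖(1 - a) • u + a • v - p‖ ≤ (1 - a) * ‖u - p‖ + a * ‖v - p‖ := by
  have hsplit : (1 - a) • u + a • v - p = (1 - a) • (u - p) + a • (v - p) := by module
  rw [hsplit, ← norm_smul_of_nonneg (sub_nonneg.mpr ha.2), ← norm_smul_of_nonneg ha.1]
  exact norm_add_le _ _

def sIterationStep (T : X → X) (a b : ℝ) (z : X) : X :=
  (1 - a) • T z + a • T ((1 - b) • z + b • T z)

theorem sIterationStep_mem {E : Set X} (hE : Convex ℝ E) {T : X → X} (hT : Set.MapsTo T E E)
    {a b : ℝ} (ha : a ∈ Set.Icc (0 : ℝ) 1) (hb : b ∈ Set.Icc (0 : ℝ) 1) {z : X} (hz : z ∈ E) :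
    sIterationStep T a b z ∈ E := by
  have hy : (1 - b) • z + b • T z ∈ E :=
    hE hz (hT hz) (sub_nonneg.mpr hb.2) hb.1 (sub_add_cancel 1 b)
  exact hE (hT hz) (hT hy) (sub_nonneg.mpr ha.2) ha.1 (sub_add_cancel 1 a)

theorem norm_sIterationStep_sub_le {E : Set X} (hE : Convex ℝ E) {T : X → X}
    (hT : Set.MapsTo T E E) {p : X} {δ : ℝ} (hδ : δ ∈ Set.Icc (0 : ℝ) 1)
    (hc : ∀ z ∈ E, ‖T z - p‖ ≤ δ * ‖z - p‖)
    {a b : ℝ} (ha : a ∈ Set.Icc (0 : ℝ) 1) (hb : b ∈ Set.Icc (0 : ℝ) 1) {z : X} (hz : z ∈ E) :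
    ‖sIterationStep T a b z - p‖ ≤ δ * ‖z - p‖ := by
  set y := (1 - b) • z + b • T z
  have hyE : y ∈ E := hE hz (hT hz) (sub_nonneg.mpr hb.2) hb.1 (sub_add_cancel 1 b)
  have hTz := hc z hz
  have hTy := hc y hyE
  have hy : ‖y - p‖ ≤ ‖z - p‖ :=
    calc ‖y - p‖ ≤ (1 - b) * ‖z - p‖ + b * ‖T z - p‖ := norm_combo_sub_le hb z (T z) p
      _ ≤ (1 - b) * ‖z - p‖ + b * (δ * ‖z - p‖) := by gcongr; exact hb.1
      _ ≤ ‖z - p‖ := by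
        nlinarith [mul_nonneg (mul_nonneg hb.1 (sub_nonneg.mpr hδ.2)) (norm_nonneg (z - p))]
  calc ‖sIterationStep T a b z - p‖ ≤ (1 - a) * ‖T z - p‖ + a * ‖T y - p‖ :=
        norm_combo_sub_le ha (T z) (T y) p
    _ ≤ (1 - a) * (δ * ‖z - p‖) + a * (δ * ‖y - p‖) := by
        gcongr
        · exact sub_nonneg.mpr ha.2
        · exact ha.1
    _ ≤ δ * ‖z - p‖ := by nlinarith [mul_nonneg (mul_nonneg ha.1 hδ.1) (sub_nonneg.mpr hy)]

end SIteration

theorem S_iteration_converges_general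
    {X : Type*} [NormedAddCommGroup X] [NormedSpace ℝ X]
    (E : Set X) (hEco : Convex ℝ E)
    (T : X → X) (hT : Set.MapsTo T E E)
    (δ : ℝ) (hδ : δ ∈ Set.Ico (0 : ℝ) 1)
    (φ : ℝ → ℝ) (hφ0 : φ 0 = 0)
    (hcontr : ∀ x ∈ E, ∀ y ∈ E, ‖T x - T y‖ ≤ δ * ‖x - y‖ + φ ‖x - T x‖)
    (p : X) (hp : p ∈ E) (hTp : T p = p)
    (α β : ℕ → ℝ)
    (hα : ∀ n, α n ∈ Set.Ico (0 : ℝ) 1)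
    (hβ : ∀ n, β n ∈ Set.Ico (0 : ℝ) 1)
    (x y : ℕ → X) (hx0 : x 0 ∈ E)
    (hy : ∀ n, y n = (1 - β n) • x n + β n • T (x n))
    (hx : ∀ n, x (n + 1) = (1 - α n) • T (x n) + α n • T (y n)) :
    Tendsto x atTop (𝓝 p) ∧ ∀ q ∈ E, T q = q → q = p := by
  have hc : ∀ z ∈ E, ‖T z - p‖ ≤ δ * ‖z - p‖ := fun z hz =>
    norm_map_sub_fixedPoint_le hφ0 hcontr hp hTp hz
  have hstep : ∀ n, x (n + 1) = sIterationStep T (α n) (β n) (x n) := fun n => by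
    rw [hx, hy]; rfl
  have hα' n := Set.Ico_subset_Icc_self (hα n)
  have hβ' n := Set.Ico_subset_Icc_self (hβ n)
  have hmem : ∀ n, x n ∈ E := fun n => by
    induction n with
    | zero => exact hx0
    | succ n ih => rw [hstep]; exact sIterationStep_mem hEco hT (hα' n) (hβ' n) ih
  have hgeom (n : ℕ) : ‖x n - p‖ ≤ δ ^ n * ‖x 0 - p‖ :=
    le_geom (u := fun n => ‖x n - p‖) hδ.1 n fun k _ => by
      rw [hstep]
      exact norm_sIterationStep_sub_le hEco hT (Set.Ico_subset_Icc_self hδ) hc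
        (hα' k) (hβ' k) (hmem k)
  refine ⟨?_, fun q hq hTq => eq_of_norm_map_sub_le hδ.2 (hc q hq) hTq⟩
  rw [tendsto_iff_norm_sub_tendsto_zero]
  refine squeeze_zero (fun n => norm_nonneg _) hgeom ?_
  simpa using (tendsto_pow_atTop_nhds_zero_of_lt_one hδ.1 hδ.2).mul_const ‖x 0 - p‖

theorem S_iteration_converges
    {X : Type*} [NormedAddCommGroup X] [NormedSpace ℝ X] [CompleteSpace X]
    (E : Set X) (hEne : E.Nonempty) (hEcl : IsClosed E) (hEco : Convex ℝ E)
    (T : X → X) (hT : Set.MapsTo T E E)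
    (δ : ℝ) (hδ : δ ∈ Set.Ico (0 : ℝ) 1)
    (φ : ℝ → ℝ) (hφmono : StrictMonoOn φ (Set.Ici 0))
    (hφcont : ContinuousOn φ (Set.Ici 0)) (hφ0 : φ 0 = 0)
    (hcontr : ∀ x ∈ E, ∀ y ∈ E, ‖T x - T y‖ ≤ δ * ‖x - y‖ + φ ‖x - T x‖)
    (p : X) (hp : p ∈ E) (hTp : T p = p)
    (α β : ℕ → ℝ)
    (hα : ∀ n, α n ∈ Set.Ico (0 : ℝ) 1)
    (hβ : ∀ n, β n ∈ Set.Ico (0 : ℝ) 1)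
    (hαdiv : Tendsto (fun N => ∑ n ∈ Finset.range N, α n) atTop atTop)
    (x y : ℕ → X) (hx0 : x 0 ∈ E)
    (hy : ∀ n, y n = (1 - β n) • x n + β n • T (x n))
    (hx : ∀ n, x (n + 1) = (1 - α n) • T (x n) + α n • T (y n)) :
    Tendsto x atTop (𝓝 p) ∧ ∀ q ∈ E, T q = q → q = p :=
  S_iteration_converges_general E hEco T hT δ hδ φ hφ0 hcontr p hp hTp α β hα hβ x y hx0 hy hx
end

section
/- Let T : E → E be contractive-like with constant δ and fixed point p, E convex, and fix k ≥ 2 with sequences {β_n^i} ⊂ [0,1). With the multistep auxiliary sequences y_n^{k−1} = (1−β_n^{k−1}) x_n + β_n^{k−1} T x_n and y_n^i = (1−β_n^i) y_n^{i+1} + β_n^i T y_n^{i+1}, one has ‖y_n^1 − T y_n^1‖ ≤ (1 + δ) ∏_{i=1}^{k−1} [1 − β_n^i(1 − δ)] ‖x_n − p‖ ≤ (1 + δ)‖x_n − p‖. -/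
/-!
Since `T p = p` and `φ 0 = 0`, the contractive-like condition at the pair `(p, z)` says that
`T` moves every point of `E` towards `p` by the factor `δ`. A Mann step `(1 - b) z + b T z`
therefore contracts the distance to `p` by `1 - b (1 - δ)`, and by convexity it stays in `E`.
Going down the chain `y^{k-1}, …, y^1` multiplies these factors, and the triangle inequality
through `p` gives `‖y^1 - T y^1‖ ≤ (1 + δ) ‖y^1 - p‖`.
-/

section

variable {X : Type*} [NormedAddCommGroup X] {T : X → X} {p z : X} {δ b : ℝ}

theorem norm_apply_sub_fixedPoint_le_of_contractiveLike {E : Set X} {φ : ℝ → ℝ}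
    (hcontr : ∀ x ∈ E, ∀ y ∈ E, ‖T x - T y‖ ≤ δ * ‖x - y‖ + φ ‖x - T x‖) (hφ0 : φ 0 = 0)
    (hp : p ∈ E) (hTp : T p = p) (hz : z ∈ E) : ‖T z - p‖ ≤ δ * ‖z - p‖ := by
  simpa [hTp, hφ0, norm_sub_rev] using hcontr p hp z hz

theorem norm_mann_sub_le [NormedSpace ℝ X] (hb0 : 0 ≤ b) (hb1 : b ≤ 1)
    (hTz : ‖T z - p‖ ≤ δ * ‖z - p‖) :
    ‖(1 - b) • z + b • T z - p‖ ≤ (1 - b * (1 - δ)) * ‖z - p‖ :=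
  calc ‖(1 - b) • z + b • T z - p‖ = ‖(1 - b) • (z - p) + b • (T z - p)‖ := by
        congr 1; module
    _ ≤ (1 - b) * ‖z - p‖ + b * ‖T z - p‖ := by
        refine (norm_add_le _ _).trans_eq ?_
        rw [norm_smul_of_nonneg (sub_nonneg.2 hb1), norm_smul_of_nonneg hb0]
    _ ≤ (1 - b) * ‖z - p‖ + b * (δ * ‖z - p‖) := by gcongr
    _ = (1 - b * (1 - δ)) * ‖z - p‖ := by ring

theorem norm_sub_apply_le (hTz : ‖T z - p‖ ≤ δ * ‖z - p‖) :
    ‖z - T z‖ ≤ (1 + δ) * ‖z - p‖ :=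
  calc ‖z - T z‖ ≤ ‖z - p‖ + ‖T z - p‖ := by
        simpa only [norm_sub_rev p] using norm_sub_le_norm_sub_add_norm_sub z p (T z)
    _ ≤ ‖z - p‖ + δ * ‖z - p‖ := by gcongr
    _ = (1 + δ) * ‖z - p‖ := by ring

theorem one_sub_mul_one_sub_mem_Icc (hb : b ∈ Set.Icc (0 : ℝ) 1)
    (hδ : δ ∈ Set.Icc (0 : ℝ) 1) :
    1 - b * (1 - δ) ∈ Set.Icc (0 : ℝ) 1 :=
  ⟨by nlinarith [hb.1, hb.2, hδ.1, hδ.2], by nlinarith [hb.1, hb.2, hδ.1, hδ.2]⟩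

theorem mem_and_norm_sub_le_prod_of_mann_chain [NormedSpace ℝ X] {E : Set X}
    (hE : Convex ℝ E) (hT : Set.MapsTo T E E) (hTE : ∀ z ∈ E, ‖T z - p‖ ≤ δ * ‖z - p‖)
    (hδ : δ ∈ Set.Icc (0 : ℝ) 1)
    {β : ℕ → ℝ} (hβ : ∀ i, β i ∈ Set.Icc (0 : ℝ) 1) {n : ℕ} {x : X} (hx : x ∈ E) {y : ℕ → X}
    (hyn : y n = (1 - β n) • x + β n • T x)
    (hyi : ∀ i, 1 ≤ i → i < n → y i = (1 - β i) • y (i + 1) + β i • T (y (i + 1)))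
    {i : ℕ} (hi1 : 1 ≤ i) (hin : i ≤ n) :
    y i ∈ E ∧ ‖y i - p‖ ≤ (∏ j ∈ Finset.Icc i n, (1 - β j * (1 - δ))) * ‖x - p‖ := by
  have step : ∀ j, ∀ w ∈ E, (1 - β j) • w + β j • T w ∈ E ∧
      ‖(1 - β j) • w + β j • T w - p‖ ≤ (1 - β j * (1 - δ)) * ‖w - p‖ := fun j w hw =>
    ⟨hE hw (hT hw) (sub_nonneg.2 (hβ j).2) (hβ j).1 (by ring),
      norm_mann_sub_le (hβ j).1 (hβ j).2 (hTE w hw)⟩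
  induction hin using Nat.decreasingInduction with
  | self => simpa [hyn] using step n x hx
  | of_succ i hin ih =>
    obtain ⟨hmem, hbound⟩ := ih (by omega)
    obtain ⟨hmem', hbound'⟩ := step i _ hmem
    rw [hyi i hi1 hin, ← Finset.insert_Icc_add_one_left_eq_Icc hin.le,
      Finset.prod_insert (by simp), mul_assoc]
    exact ⟨hmem', hbound'.trans
      (mul_le_mul_of_nonneg_left hbound (one_sub_mul_one_sub_mem_Icc (hβ i) hδ).1)⟩

end

theorem multistep_auxiliary_estimate_general
    {X : Type*} [NormedAddCommGroup X] [NormedSpace ℝ X]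
    (E : Set X) (hEco : Convex ℝ E) (T : X → X) (hT : Set.MapsTo T E E)
    (δ : ℝ) (hδ : δ ∈ Set.Ico (0 : ℝ) 1)
    (φ : ℝ → ℝ) (hφ0 : φ 0 = 0)
    (hcontr : ∀ x ∈ E, ∀ y ∈ E, ‖T x - T y‖ ≤ δ * ‖x - y‖ + φ ‖x - T x‖)
    (p : X) (hp : p ∈ E) (hTp : T p = p)
    (k : ℕ) (hk : 2 ≤ k)
    (β : ℕ → ℝ) (hβ : ∀ i, β i ∈ Set.Ico (0 : ℝ) 1)
    (x : X) (hx : x ∈ E) (y : ℕ → X)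
    (hyk : y (k - 1) = (1 - β (k - 1)) • x + β (k - 1) • T x)
    (hyi : ∀ i, 1 ≤ i → i ≤ k - 2 →
      y i = (1 - β i) • y (i + 1) + β i • T (y (i + 1))) :
    ‖y 1 - T (y 1)‖ ≤
        (1 + δ) * (∏ i ∈ Finset.Icc 1 (k - 1), (1 - β i * (1 - δ))) * ‖x - p‖ ∧
    (1 + δ) * (∏ i ∈ Finset.Icc 1 (k - 1), (1 - β i * (1 - δ))) * ‖x - p‖ ≤
        (1 + δ) * ‖x - p‖ := by
  have hTE : ∀ z ∈ E, ‖T z - p‖ ≤ δ * ‖z - p‖ := fun z hz =>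
    norm_apply_sub_fixedPoint_le_of_contractiveLike hcontr hφ0 hp hTp hz
  have hβ' : ∀ i, β i ∈ Set.Icc (0 : ℝ) 1 := fun i => Set.Ico_subset_Icc_self (hβ i)
  have hδ' : δ ∈ Set.Icc (0 : ℝ) 1 := Set.Ico_subset_Icc_self hδ
  obtain ⟨hy1, hy1_bound⟩ := mem_and_norm_sub_le_prod_of_mann_chain hEco hT hTE hδ' hβ' hx
    hyk (fun i hi1 hi => hyi i hi1 (by omega)) le_rfl (by omega)
  have hprod1 : ∏ i ∈ Finset.Icc 1 (k - 1), (1 - β i * (1 - δ)) ≤ 1 :=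
    Finset.prod_le_one (fun i _ => (one_sub_mul_one_sub_mem_Icc (hβ' i) hδ').1)
      fun i _ => (one_sub_mul_one_sub_mem_Icc (hβ' i) hδ').2
  have hδ1 : 0 ≤ 1 + δ := by linarith [hδ.1]
  constructor
  · rw [mul_assoc]
    exact (norm_sub_apply_le (hTE _ hy1)).trans (mul_le_mul_of_nonneg_left hy1_bound hδ1)
  · rw [mul_assoc]
    exact mul_le_mul_of_nonneg_left
      (mul_le_of_le_one_left (norm_nonneg _) hprod1) hδ1

theorem multistep_auxiliary_estimate
    {X : Type*} [NormedAddCommGroup X] [NormedSpace ℝ X]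
    (E : Set X) (hEco : Convex ℝ E) (T : X → X) (hT : Set.MapsTo T E E)
    (δ : ℝ) (hδ : δ ∈ Set.Ico (0 : ℝ) 1)
    (φ : ℝ → ℝ) (hφmono : StrictMonoOn φ (Set.Ici 0))
    (hφcont : ContinuousOn φ (Set.Ici 0)) (hφ0 : φ 0 = 0)
    (hcontr : ∀ x ∈ E, ∀ y ∈ E, ‖T x - T y‖ ≤ δ * ‖x - y‖ + φ ‖x - T x‖)
    (p : X) (hp : p ∈ E) (hTp : T p = p)
    (k : ℕ) (hk : 2 ≤ k)
    (β : ℕ → ℝ) (hβ : ∀ i, β i ∈ Set.Ico (0 : ℝ) 1)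
    (x : X) (hx : x ∈ E) (y : ℕ → X)
    (hyk : y (k - 1) = (1 - β (k - 1)) • x + β (k - 1) • T x)
    (hyi : ∀ i, 1 ≤ i → i ≤ k - 2 →
      y i = (1 - β i) • y (i + 1) + β i • T (y (i + 1))) :
    ‖y 1 - T (y 1)‖ ≤
        (1 + δ) * (∏ i ∈ Finset.Icc 1 (k - 1), (1 - β i * (1 - δ))) * ‖x - p‖ ∧
    (1 + δ) * (∏ i ∈ Finset.Icc 1 (k - 1), (1 - β i * (1 - δ))) * ‖x - p‖ ≤
        (1 + δ) * ‖x - p‖ :=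
  multistep_auxiliary_estimate_general E hEco T hT δ hδ φ hφ0 hcontr p hp hTp k hk β hβ x hx y hyk
    hyi
end

section
/- Let T, T̃ : E → E with ‖Tx − T̃x‖ ≤ ε for all x, and T contractive-like with constant δ and gauge φ, E convex. If y = (1 − β) x + β T x and v = (1 − β) u + β T̃ u with β ∈ [0,1), then ‖y − v‖ ≤ [1 − β(1 − δ)] ‖x − u‖ + β φ(‖x − Tx‖) + β ε. -/
open Filter Topology

theorem approx_one_step_estimate
    {X : Type*} [NormedAddCommGroup X] [NormedSpace ℝ X]
    (E : Set X) (hEco : Convex ℝ E)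
    (T S : X → X) (hT : Set.MapsTo T E E) (hS : Set.MapsTo S E E)
    (δ : ℝ) (hδ : δ ∈ Set.Ico (0 : ℝ) 1)
    (φ : ℝ → ℝ) (hφmono : StrictMonoOn φ (Set.Ici 0))
    (hφcont : ContinuousOn φ (Set.Ici 0)) (hφ0 : φ 0 = 0)
    (hcontr : ∀ x ∈ E, ∀ y ∈ E, ‖T x - T y‖ ≤ δ * ‖x - y‖ + φ ‖x - T x‖)
    (ε : ℝ) (hε : 0 < ε) (happrox : ∀ x ∈ E, ‖T x - S x‖ ≤ ε)
    (x u : X) (hx : x ∈ E) (hu : u ∈ E)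
    (β : ℝ) (hβ : β ∈ Set.Ico (0 : ℝ) 1)
    (y v : X)
    (hy : y = (1 - β) • x + β • T x)
    (hv : v = (1 - β) • u + β • S u) :
    ‖y - v‖ ≤ (1 - β * (1 - δ)) * ‖x - u‖ + β * φ ‖x - T x‖ + β * ε := by
  obtain ⟨hβ0, hβ1⟩ := hβ
  have h1 : y - v = (1 - β) • (x - u) + β • (T x - T u) + β • (T u - S u) := by
    rw [hy, hv]; module
  have h2 : ‖y - v‖ ≤ (1 - β) * ‖x - u‖ + β * ‖T x - T u‖ + β * ‖T u - S u‖ := by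
    rw [h1]
    calc ‖(1 - β) • (x - u) + β • (T x - T u) + β • (T u - S u)‖
        ≤ ‖(1 - β) • (x - u) + β • (T x - T u)‖ + ‖β • (T u - S u)‖ := norm_add_le _ _
      _ ≤ ‖(1 - β) • (x - u)‖ + ‖β • (T x - T u)‖ + ‖β • (T u - S u)‖ := by
          gcongr; exact norm_add_le _ _
      _ = (1 - β) * ‖x - u‖ + β * ‖T x - T u‖ + β * ‖T u - S u‖ := by
          rw [norm_smul, norm_smul, norm_smul, Real.norm_eq_abs, Real.norm_eq_abs,
            abs_of_nonneg hβ0, abs_of_nonneg (by linarith)]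
  have h3 := hcontr x hx u hu
  have h4 := happrox u hu
  nlinarith [h2, norm_nonneg (x - u)]
end

section
/- Let T be contractive-like with constant δ ∈ [0,1) and gauge φ and T̃ an ε-approximate operator of T, E convex. For the S-iteration steps x_{n+1} = (1−α_n)Tx_n + α_n T y_n, u_{n+1} = (1−α_n)T̃u_n + α_n T̃v_n, y_n = (1−β_n)x_n + β_n Tx_n, v_n = (1−β_n)u_n + β_n T̃u_n, with α_n ≥ 1/2, α_n, β_n ∈ [0,1), one has ‖x_{n+1} − u_{n+1}‖ ≤ [1 − α_n(1 − δ)]‖x_n − u_n‖ + α_n(1−δ) · [2φ(‖x_n − Tx_n‖) + φ(‖y_n − Ty_n‖) + 3ε]/(1 − δ). -/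
open Filter Topology

theorem S_iteration_step_estimate
    {X : Type*} [NormedAddCommGroup X] [NormedSpace ℝ X]
    (E : Set X) (hEco : Convex ℝ E)
    (T S : X → X) (hT : Set.MapsTo T E E) (hS : Set.MapsTo S E E)
    (δ : ℝ) (hδ : δ ∈ Set.Ico (0 : ℝ) 1)
    (φ : ℝ → ℝ) (hφmono : StrictMonoOn φ (Set.Ici 0))
    (hφcont : ContinuousOn φ (Set.Ici 0)) (hφ0 : φ 0 = 0)
    (hcontr : ∀ x ∈ E, ∀ y ∈ E, ‖T x - T y‖ ≤ δ * ‖x - y‖ + φ ‖x - T x‖)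
    (ε : ℝ) (hε : 0 < ε) (happrox : ∀ x ∈ E, ‖T x - S x‖ ≤ ε)
    (α β : ℝ) (hα : α ∈ Set.Ico (0 : ℝ) 1) (hα2 : (1 : ℝ) / 2 ≤ α)
    (hβ : β ∈ Set.Ico (0 : ℝ) 1)
    (x u : X) (hx : x ∈ E) (hu : u ∈ E)
    (y v x' u' : X)
    (hy : y = (1 - β) • x + β • T x)
    (hv : v = (1 - β) • u + β • S u)
    (hx' : x' = (1 - α) • T x + α • T y)
    (hu' : u' = (1 - α) • S u + α • S v) :
    ‖x' - u'‖ ≤ (1 - α * (1 - δ)) * ‖x - u‖ +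
      α * (1 - δ) * ((2 * φ ‖x - T x‖ + φ ‖y - T y‖ + 3 * ε) / (1 - δ)) := by

  obtain ⟨hδ0, hδ1⟩ := hδ
  obtain ⟨hα0, hα1⟩ := hα
  obtain ⟨hβ0, hβ1⟩ := hβ
  have hφnn : ∀ t : ℝ, 0 ≤ t → 0 ≤ φ t := by
    intro t ht
    rcases eq_or_lt_of_le ht with h | h
    · simp [← h, hφ0]
    · have := hφmono (Set.self_mem_Ici) (le_of_lt h) h
      linarith [hφ0 ▸ this]
  have hyE : y ∈ E := by
    rw [hy]; exact hEco hx (hT hx) (by linarith) hβ0 (by ring)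
  have hvE : v ∈ E := by
    rw [hv]; exact hEco hu (hS hu) (by linarith) hβ0 (by ring)
  set F := φ ‖x - T x‖ with hF
  set G := φ ‖y - T y‖ with hG
  have hFnn : 0 ≤ F := hφnn _ (norm_nonneg _)
  have hGnn : 0 ≤ G := hφnn _ (norm_nonneg _)
  have h1 : ‖T x - S u‖ ≤ δ * ‖x - u‖ + F + ε := by
    have t1 : ‖T x - S u‖ ≤ ‖T x - T u‖ + ‖T u - S u‖ := by
      have := norm_add_le (T x - T u) (T u - S u); simpa using this
    have t2 := hcontr x hx u hu
    have t3 := happrox u hu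
    linarith
  have hyv : ‖y - v‖ ≤ (1 - β) * ‖x - u‖ + β * ‖T x - S u‖ := by
    have e : y - v = (1 - β) • (x - u) + β • (T x - S u) := by
      rw [hy, hv]; module
    rw [e]
    calc ‖(1 - β) • (x - u) + β • (T x - S u)‖
        ≤ ‖(1 - β) • (x - u)‖ + ‖β • (T x - S u)‖ := norm_add_le _ _
      _ = (1 - β) * ‖x - u‖ + β * ‖T x - S u‖ := by
          rw [norm_smul, norm_smul, Real.norm_eq_abs, Real.norm_eq_abs,
            abs_of_nonneg (by linarith : (0:ℝ) ≤ 1 - β), abs_of_nonneg hβ0]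
  have h2 : ‖T y - S v‖ ≤ δ * ‖y - v‖ + G + ε := by
    have t1 : ‖T y - S v‖ ≤ ‖T y - T v‖ + ‖T v - S v‖ := by
      have := norm_add_le (T y - T v) (T v - S v); simpa using this
    have t2 := hcontr y hyE v hvE
    have t3 := happrox v hvE
    linarith
  have h3 : ‖x' - u'‖ ≤ (1 - α) * ‖T x - S u‖ + α * ‖T y - S v‖ := by
    have e : x' - u' = (1 - α) • (T x - S u) + α • (T y - S v) := by
      rw [hx', hu']; module
    rw [e]
    calc ‖(1 - α) • (T x - S u) + α • (T y - S v)‖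
        ≤ ‖(1 - α) • (T x - S u)‖ + ‖α • (T y - S v)‖ := norm_add_le _ _
      _ = (1 - α) * ‖T x - S u‖ + α * ‖T y - S v‖ := by
          rw [norm_smul, norm_smul, Real.norm_eq_abs, Real.norm_eq_abs,
            abs_of_nonneg (by linarith : (0:ℝ) ≤ 1 - α), abs_of_nonneg hα0]
  have hne : (1:ℝ) - δ ≠ 0 := by intro h; linarith
  have hrhs : α * (1 - δ) * ((2 * F + G + 3 * ε) / (1 - δ))
      = α * (2 * F + G + 3 * ε) := by
    field_simp
  rw [hrhs]
  have hnn : (0:ℝ) ≤ ‖x - u‖ := norm_nonneg _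
  -- step A
  have hA : ‖y - v‖ ≤ (1 - β) * ‖x - u‖ + β * (δ * ‖x - u‖ + F + ε) := by
    have := mul_le_mul_of_nonneg_left h1 hβ0
    linarith
  -- step B
  have hB : ‖T y - S v‖ ≤ δ * ((1 - β) * ‖x - u‖ + β * (δ * ‖x - u‖ + F + ε)) + G + ε := by
    have := mul_le_mul_of_nonneg_left hA hδ0
    linarith
  -- step C
  have hC : ‖x' - u'‖ ≤ (1 - α) * (δ * ‖x - u‖ + F + ε)
      + α * (δ * ((1 - β) * ‖x - u‖ + β * (δ * ‖x - u‖ + F + ε)) + G + ε) := by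
    have c1 := mul_le_mul_of_nonneg_left h1 (by linarith : (0:ℝ) ≤ 1 - α)
    have c2 := mul_le_mul_of_nonneg_left hB hα0
    linarith
  have p1 : 0 ≤ (1 - δ) * (1 - α) * ‖x - u‖ :=
    mul_nonneg (mul_nonneg (by linarith) (by linarith)) hnn
  have p2 : 0 ≤ α * β * δ * (1 - δ) * ‖x - u‖ :=
    mul_nonneg (mul_nonneg (mul_nonneg (mul_nonneg hα0 hβ0) hδ0) (by linarith)) hnn
  have p3 : 0 ≤ (2 * α - 1) * (F + ε) :=
    mul_nonneg (by linarith) (by linarith)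
  have p4 : 0 ≤ α * (1 - δ * β) * (F + ε) := by
    have : δ * β ≤ 1 := by nlinarith
    exact mul_nonneg (mul_nonneg hα0 (by linarith)) (by linarith)
  nlinarith [hC, p1, p2, p3, p4]
end
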